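/- Conservation of the second moment Z_0 under the effective gradient flow: let P be a finite set of index quadruples and let E : ℝ → ({0,…,p−1} → ℝ^d) be differentiable with Z_0(E(t)) = Σ_k |E_k(t)|² > 0 for all t, and suppose each embedding satisfies the gradient-flow ODE dE_k/dt = −(1/Z_0) G_k + (ℓ_0/Z_0²)·2E_k, where ℓ_0(E) = Σ_{(i,j,m,n)∈P} |E_i + E_j − E_m − E_n|² and G_k = 2 Σ_{(i,j,m,n)∈P} (E_i + E_j − E_m − E_n)(δ_{ik} + δ_{jk} − δ_{mk} − δ_{nk}). Then Z_0(E(t)) is constant in t. -/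

import Mathlib

open RealInnerProductSpace


/-- The parallelogram loss `ℓ₀(E) = ∑_{(i,j,m,n)∈P} ‖E i + E j − E m − E n‖²`. -/
noncomputable def parallelogramLoss {p d : ℕ}
    (P : Finset (Fin p × Fin p × Fin p × Fin p))
    (E : Fin p → EuclideanSpace ℝ (Fin d)) : ℝ :=
  ∑ q ∈ P, ‖E q.1 + E q.2.1 - E q.2.2.1 - E q.2.2.2‖ ^ 2

/-- The second moment `Z₀(E) = ∑_k ‖E_k‖²`. -/
noncomputable def secondMoment {p d : ℕ}
    (E : Fin p → EuclideanSpace ℝ (Fin d)) : ℝ :=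
  ∑ k, ‖E k‖ ^ 2

/-- The gradient `∂ℓ₀/∂E_k = 2 ∑_{(i,j,m,n)∈P} (E i + E j − E m − E n)(δ_{ik}+δ_{jk}−δ_{mk}−δ_{nk})`. -/
noncomputable def lossGrad {p d : ℕ}
    (P : Finset (Fin p × Fin p × Fin p × Fin p))
    (E : Fin p → EuclideanSpace ℝ (Fin d)) (k : Fin p) :
    EuclideanSpace ℝ (Fin d) :=
  (2 : ℝ) • ∑ q ∈ P,
    (((if q.1 = k then (1 : ℝ) else 0) + (if q.2.1 = k then 1 else 0)
      - (if q.2.2.1 = k then 1 else 0) - (if q.2.2.2 = k then 1 else 0))) •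
      (E q.1 + E q.2.1 - E q.2.2.1 - E q.2.2.2)

noncomputable def effectiveFlow {p d : ℕ}
    (P : Finset (Fin p × Fin p × Fin p × Fin p))
    (E : Fin p → EuclideanSpace ℝ (Fin d)) (k : Fin p) : EuclideanSpace ℝ (Fin d) :=
  -(1 / secondMoment E) • lossGrad P E k
    + (parallelogramLoss P E / secondMoment E ^ 2) • ((2 : ℝ) • E k)

/-- Euler's identity for the quadratic form `ℓ₀`. -/
theorem sum_inner_lossGrad {p d : ℕ} (P : Finset (Fin p × Fin p × Fin p × Fin p))
    (E : Fin p → EuclideanSpace ℝ (Fin d)) :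
    ∑ k, ⟪E k, lossGrad P E k⟫ = 2 * parallelogramLoss P E := by
  simp only [lossGrad, parallelogramLoss, inner_smul_right, inner_sum, ← Finset.mul_sum]
  rw [Finset.sum_comm]
  congr 1
  refine Finset.sum_congr rfl fun q _ => ?_
  simp only [← real_inner_self_eq_norm_sq, ← real_inner_smul_left, ← sum_inner, add_smul,
    sub_smul, ite_smul, one_smul, zero_smul, Finset.sum_add_distrib, Finset.sum_sub_distrib,
    Finset.sum_ite_eq, Finset.mem_univ, if_true]

/-- `ℓ_eff` is scale invariant, so its gradient flow is orthogonal to `E`. -/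
theorem sum_inner_effectiveFlow {p d : ℕ} (P : Finset (Fin p × Fin p × Fin p × Fin p))
    (E : Fin p → EuclideanSpace ℝ (Fin d)) :
    ∑ k, ⟪E k, effectiveFlow P E k⟫ = 0 := by
  have hnorm : ∑ k, ‖E k‖ ^ 2 = secondMoment E := rfl
  calc ∑ k, ⟪E k, effectiveFlow P E k⟫
      = -(1 / secondMoment E) * ∑ k, ⟪E k, lossGrad P E k⟫
          + 2 * (parallelogramLoss P E / secondMoment E ^ 2) * ∑ k, ‖E k‖ ^ 2 := by
        simp only [effectiveFlow, inner_add_right, inner_smul_right, real_inner_self_eq_norm_sq,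
          Finset.sum_add_distrib, Finset.mul_sum]
        ring_nf
    _ = 2 * (parallelogramLoss P E / secondMoment E ^ 2 * secondMoment E
          - parallelogramLoss P E / secondMoment E) := by
        rw [sum_inner_lossGrad, hnorm]
        ring
    _ = 0 := by
        rcases eq_or_ne (secondMoment E) 0 with hZ | hZ
        · simp [hZ]
        · field_simp
          ring

theorem HasDerivAt.secondMoment {p d : ℕ} {E : ℝ → Fin p → EuclideanSpace ℝ (Fin d)}
    {E' : Fin p → EuclideanSpace ℝ (Fin d)} {t : ℝ}
    (hE : ∀ k, HasDerivAt (fun s => E s k) (E' k) t) :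
    HasDerivAt (fun s => secondMoment (E s)) (2 * ∑ k, ⟪E t k, E' k⟫) t := by
  rw [Finset.mul_sum]
  exact HasDerivAt.fun_sum fun k _ => (hE k).norm_sq

theorem secondMoment_conserved_general
    (p d : ℕ) (P : Finset (Fin p × Fin p × Fin p × Fin p))
    (E : ℝ → Fin p → EuclideanSpace ℝ (Fin d))
    (hode : ∀ t (k : Fin p), HasDerivAt (fun s => E s k)
      (-(1 / secondMoment (E t)) • lossGrad P (E t) k
        + (parallelogramLoss P (E t) / (secondMoment (E t)) ^ 2) • ((2 : ℝ) • E t k)) t) :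
    ∀ t s : ℝ, secondMoment (E t) = secondMoment (E s) := by
  have hderiv : ∀ t, HasDerivAt (fun s => secondMoment (E s)) 0 t := fun t => by
    simpa only [sum_inner_effectiveFlow, mul_zero] using
      HasDerivAt.secondMoment (E' := effectiveFlow P (E t)) (hode t)
  exact is_const_of_deriv_eq_zero (fun t => (hderiv t).differentiableAt) fun t => (hderiv t).deriv

/-- Conservation of the second moment `Z₀` under the effective gradient flow
`dE_k/dt = −(1/Z₀) ∂ℓ₀/∂E_k + (ℓ₀/Z₀²)·2E_k`. -/
theorem secondMoment_conserved
    (p d : ℕ) (P : Finset (Fin p × Fin p × Fin p × Fin p))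
    (E : ℝ → Fin p → EuclideanSpace ℝ (Fin d))
    (hZ : ∀ t, 0 < secondMoment (E t))
    (hode : ∀ t (k : Fin p), HasDerivAt (fun s => E s k)
      (-(1 / secondMoment (E t)) • lossGrad P (E t) k
        + (parallelogramLoss P (E t) / (secondMoment (E t)) ^ 2) • ((2 : ℝ) • E t k)) t) :
    ∀ t s : ℝ, secondMoment (E t) = secondMoment (E s) :=
  secondMoment_conserved_general p d P E hode
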